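/- Let 0 < τ < 1 be real, A a sequence of length n over an arbitrary type, ℓ ≥ 0 an integer, and P ⊆ {1, …, n} an integer interval of length 2^ℓ. Call a pair (x, I) relevant if I is a maximal run of Cov_τ(x) and #{k ∈ I ∩ P : A(k) = x} > (τ/4)·2^ℓ. Then the number of relevant pairs is less than 4/τ. -/
import Mathlib


open scoped Classical

/-- Number of occurrences of `x` in `A[i,j]` (positions `i..j`, 1-based). -/
noncomputable def majCount {α : Type*} (A : ℕ → α) (i j : ℕ) (x : α) : ℕ :=
  ((Finset.Icc i j).filter (fun k => A k = x)).card

/-- `x` is a `τ`-majority in the range `A[i,j]`. -/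
def IsMaj {α : Type*} (τ : ℝ) (A : ℕ → α) (i j : ℕ) (x : α) : Prop :=
  τ * ((j : ℝ) - (i : ℝ) + 1) < (majCount A i j x : ℝ)

/-- `Cov τ A n x`: the set of positions `k ∈ {1,…,n}` lying in at least one interval
`[i,j] ⊆ {1,…,n}` in which `x` is a `τ`-majority. -/
def Cov {α : Type*} (τ : ℝ) (A : ℕ → α) (n : ℕ) (x : α) : Set ℕ :=
  {k | ∃ i j : ℕ, 1 ≤ i ∧ i ≤ j ∧ j ≤ n ∧ i ≤ k ∧ k ≤ j ∧ IsMaj τ A i j x}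

/-- `[l,r]` is a maximal run of `Cov τ A n x`. -/
def IsMaxRun {α : Type*} (τ : ℝ) (A : ℕ → α) (n : ℕ) (x : α) (l r : ℕ) : Prop :=
  l ≤ r ∧ (∀ k : ℕ, l ≤ k → k ≤ r → k ∈ Cov τ A n x) ∧
    (l = 1 ∨ (l - 1) ∉ Cov τ A n x) ∧ (r = n ∨ (r + 1) ∉ Cov τ A n x)

lemma mem_cov_bounds {α : Type*} {τ : ℝ} {A : ℕ → α} {n : ℕ} {x : α} {k : ℕ}
    (h : k ∈ Cov τ A n x) : 1 ≤ k ∧ k ≤ n := by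
  obtain ⟨i, j, h1, h2, h3, h4, h5, _⟩ := h
  omega

/-- Two overlapping maximal runs coincide. -/
lemma maxrun_eq {α : Type*} {τ : ℝ} {A : ℕ → α} {n : ℕ} {x : α} {l r l' r' k : ℕ}
    (h : IsMaxRun τ A n x l r) (h' : IsMaxRun τ A n x l' r')
    (hk1 : l ≤ k) (hk2 : k ≤ r) (hk3 : l' ≤ k) (hk4 : k ≤ r') : l = l' ∧ r = r' := by
  obtain ⟨hlr, hcov, hleft, hright⟩ := h
  obtain ⟨hlr', hcov', hleft', hright'⟩ := h'
  have hl1 : 1 ≤ l := (mem_cov_bounds (hcov l le_rfl hlr)).1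
  have hl1' : 1 ≤ l' := (mem_cov_bounds (hcov' l' le_rfl hlr')).1
  have hrn : r ≤ n := (mem_cov_bounds (hcov r hlr le_rfl)).2
  have hrn' : r' ≤ n := (mem_cov_bounds (hcov' r' hlr' le_rfl)).2
  constructor
  · by_contra hne
    rcases Nat.lt_or_ge l l' with hlt | hge
    · rcases hleft' with h1 | h1
      · omega
      · exact h1 (hcov (l' - 1) (by omega) (by omega))
    · have hlt : l' < l := by omega
      rcases hleft with h1 | h1
      · omega
      · exact h1 (hcov' (l - 1) (by omega) (by omega))
  · by_contra hne
    rcases Nat.lt_or_ge r r' with hlt | hge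
    · rcases hright with h1 | h1
      · omega
      · exact h1 (hcov' (r + 1) (by omega) (by omega))
    · have hlt : r' < r := by omega
      rcases hright' with h1 | h1
      · omega
      · exact h1 (hcov (r' + 1) (by omega) (by omega))

/-- The occurrences of `q.1` in `[q.2.1, q.2.2] ∩ [p, m]`. -/
noncomputable def fset {α : Type*} (A : ℕ → α) (p m : ℕ) (q : α × ℕ × ℕ) : Finset ℕ :=
  (Finset.Icc q.2.1 q.2.2 ∩ Finset.Icc p m).filter (fun k => A k = q.1)

theorem stmt14_aux {α : Type*} (τ : ℝ) (hτ0 : 0 < τ)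
    (A : ℕ → α) (n : ℕ) (ℓ : ℕ) (p : ℕ) (hp1 : 1 ≤ p) :
    ({q : α × ℕ × ℕ | IsMaxRun τ A n q.1 q.2.1 q.2.2 ∧
        (τ / 4) * (2 : ℝ) ^ ℓ <
          ((fset A p (p + 2 ^ ℓ - 1) q).card : ℝ)}.ncard : ℝ) < 4 / τ := by
  classical
  have hτ4 : (0 : ℝ) < 4 / τ := by positivity
  set m := p + 2 ^ ℓ - 1 with hm
  have h2p : 1 ≤ 2 ^ ℓ := Nat.one_le_two_pow
  have hPcard : (Finset.Icc p m).card = 2 ^ ℓ := by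
    rw [Nat.card_Icc]; omega
  set S : Set (α × ℕ × ℕ) := {q | IsMaxRun τ A n q.1 q.2.1 q.2.2 ∧
      (τ / 4) * (2 : ℝ) ^ ℓ < ((fset A p m q).card : ℝ)} with hS
  have hdisj : ∀ q ∈ S, ∀ q' ∈ S, q ≠ q' → Disjoint (fset A p m q) (fset A p m q') := by
    intro q hq q' hq' hne
    rw [Finset.disjoint_left]
    intro k hk hk'
    simp only [fset, Finset.mem_filter, Finset.mem_inter, Finset.mem_Icc] at hk hk'
    have hx : q.1 = q'.1 := by rw [← hk.2, hk'.2]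
    have h2 : IsMaxRun τ A n q.1 q'.2.1 q'.2.2 := by rw [hx]; exact hq'.1
    have := maxrun_eq hq.1 h2 hk.1.1.1 hk.1.1.2 hk'.1.1.1 hk'.1.1.2
    exact hne (Prod.ext hx (Prod.ext this.1 this.2))
  have hne : ∀ q ∈ S, (fset A p m q).Nonempty := by
    intro q hq
    rw [← Finset.card_pos]
    have h1 : (0 : ℝ) < ((fset A p m q).card : ℝ) := lt_trans (by positivity) hq.2
    exact_mod_cast h1
  have hsub : ∀ q, fset A p m q ⊆ Finset.Icc p m := by
    intro q k hk
    simp only [fset, Finset.mem_filter, Finset.mem_inter] at hk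
    exact hk.1.2
  have hinj : Set.InjOn (fset A p m) S := by
    intro q hq q' hq' heq
    by_contra hne2
    have hd := hdisj q hq q' hq' hne2
    obtain ⟨k, hk⟩ := hne q hq
    exact Finset.disjoint_left.mp hd hk (heq ▸ hk)
  have hfin : S.Finite := by
    apply Set.Finite.of_finite_image _ hinj
    apply Set.Finite.subset (Finset.Icc p m).powerset.finite_toSet
    intro t ht
    obtain ⟨q, _, rfl⟩ := ht
    exact Finset.mem_coe.mpr (Finset.mem_powerset.mpr (hsub q))
  set T := hfin.toFinset with hT
  have hmemT : ∀ q, q ∈ T ↔ q ∈ S := fun q => hfin.mem_toFinset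
  have hcard_eq : S.ncard = T.card := Set.ncard_eq_toFinset_card S hfin
  rw [hcard_eq]
  rcases T.eq_empty_or_nonempty with hTe | hTne
  · rw [hTe]; simpa using hτ4
  · have hsum_le : ∑ q ∈ T, (fset A p m q).card ≤ 2 ^ ℓ := by
      rw [← Finset.card_biUnion (fun q hq q' hq' hne' =>
        hdisj q ((hmemT q).mp hq) q' ((hmemT q').mp hq') hne')]
      calc (T.biUnion (fset A p m)).card ≤ (Finset.Icc p m).card := by
            apply Finset.card_le_card
            intro k hk
            obtain ⟨q, _, hkq⟩ := Finset.mem_biUnion.mp hk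
            exact hsub q hkq
        _ = 2 ^ ℓ := hPcard
    have h1 : ∑ _q ∈ T, ((τ / 4) * (2 : ℝ) ^ ℓ) < ∑ q ∈ T, ((fset A p m q).card : ℝ) :=
      Finset.sum_lt_sum_of_nonempty hTne (fun q hq => ((hmemT q).mp hq).2)
    rw [Finset.sum_const, nsmul_eq_mul] at h1
    have h2 : ∑ q ∈ T, ((fset A p m q).card : ℝ) ≤ (2 : ℝ) ^ ℓ := by
      calc ∑ q ∈ T, ((fset A p m q).card : ℝ)
          = ((∑ q ∈ T, (fset A p m q).card : ℕ) : ℝ) := by push_cast; ring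
        _ ≤ ((2 ^ ℓ : ℕ) : ℝ) := by exact_mod_cast hsum_le
        _ = (2 : ℝ) ^ ℓ := by push_cast; ring
    have h2pos : (0 : ℝ) < (2 : ℝ) ^ ℓ := by positivity
    rw [lt_div_iff₀ hτ0]
    nlinarith [h1, h2, h2pos]

/-- For an interval `P = [p, p + 2^ℓ - 1] ⊆ {1,…,n}` of length `2^ℓ`, the number of
pairs `(x, [l,r])`, with `[l,r]` a maximal run of `Cov_τ(x)` such that `x` occurs more
than `(τ/4)·2^ℓ` times in `[l,r] ∩ P`, is less than `4/τ`. -/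
theorem stmt14 {α : Type*} (τ : ℝ) (hτ0 : 0 < τ) (hτ1 : τ < 1)
    (A : ℕ → α) (n : ℕ) (ℓ : ℕ) (p : ℕ) (hp1 : 1 ≤ p) (hPn : p + 2 ^ ℓ - 1 ≤ n) :
    ({q : α × ℕ × ℕ | IsMaxRun τ A n q.1 q.2.1 q.2.2 ∧
        (τ / 4) * (2 : ℝ) ^ ℓ <
          (((Finset.Icc q.2.1 q.2.2 ∩ Finset.Icc p (p + 2 ^ ℓ - 1)).filter
            (fun k => A k = q.1)).card : ℝ)}.ncard : ℝ) < 4 / τ := by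
  exact stmt14_aux τ hτ0 A n ℓ p hp1
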